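/- arXiv:2503.01716 — 3 statements merged into one kernel-verified Lean document; each statement's English description precedes it below -/
import Mathlib

section
/- Let c ∈ ℝ, α > 0, and 0 ≤ s < t. Then the function R(t,s) = c (t−s)^{α−1} E_{α,α}(c (t−s)^α) satisfies the resolvent equation for the fractional kernel G(t,s) = c (t−s)^{α−1} / Γ(α): that is, c (t−s)^{α−1} E_{α,α}(c (t−s)^α) = c (t−s)^{α−1} / Γ(α) + ∫_s^t (c (t−z)^{α−1} / Γ(α)) · c (z−s)^{α−1} E_{α,α}(c (z−s)^α) dz. -/
/-!
Expanding the Mittag-Leffler function termwise gives `R(t, s) = ∑_{n ≥ 1} cⁿ k_{nα}(t - s)`,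
where `k_a(u) = u^(a-1) / Γ(a)` are the Riemann–Liouville kernels and `G = c k_α`.
The Beta integral yields the semigroup law `k_a ⋆ k_b = k_{a+b}`, hence
`G ⋆ R = ∑_{n ≥ 2} cⁿ k_{nα}(t - s) = R - G`. Integrating termwise is legitimate because the
series converges absolutely: by log-convexity of `Γ`, `Γ(y + α) / Γ(y) → ∞`, so `Γ(nα + γ)` grows
faster than any geometric sequence.
-/

open MeasureTheory Set Filter

noncomputable def mittagLeffler (β γ x : ℝ) : ℝ :=
  ∑' n : ℕ, x ^ n / Real.Gamma (n * β + γ)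

theorem Real.Gamma_add_one_le_Gamma_add_mul_rpow {β y : ℝ} (hβ₀ : 0 ≤ β) (hβ₁ : β ≤ 1)
    (hy : 0 < y + β) :
    Real.Gamma (y + 1) ≤ Real.Gamma (y + β) * (y + β) ^ (1 - β) := by
  have hΓ : 0 < Real.Gamma (y + β) := Real.Gamma_pos_of_pos hy
  -- `y + 1` is the convex combination `β • (y + β) + (1 - β) • (y + β + 1)`
  have hconv := Real.convexOn_log_Gamma.2 (mem_Ioi.2 hy) (mem_Ioi.2 (by linarith : 0 < y + β + 1))
    hβ₀ (sub_nonneg.2 hβ₁) (add_sub_cancel β 1)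
  simp only [smul_eq_mul, Function.comp_apply] at hconv
  rw [show β * (y + β) + (1 - β) * (y + β + 1) = y + 1 by ring,
    Real.Gamma_add_one hy.ne', Real.log_mul hy.ne' hΓ.ne'] at hconv
  rw [← Real.log_le_log_iff (Real.Gamma_pos_of_pos (by linarith)) (by positivity),
    Real.log_mul hΓ.ne' (by positivity), Real.log_rpow hy]
  linarith

theorem Real.tendsto_Gamma_add_div_Gamma_atTop {α : ℝ} (hα : 0 < α) :
    Tendsto (fun y => Real.Gamma (y + α) / Real.Gamma y) atTop atTop := by
  set β := min α 1
  have hβ : 0 < β := lt_min hα one_pos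
  have hβ₁ : β ≤ 1 := min_le_right α 1
  refine tendsto_atTop_mono' atTop ?_
    ((tendsto_rpow_atTop hβ).const_mul_atTop (by positivity : (0 : ℝ) < 2 ^ (β - 1)))
  filter_upwards [eventually_ge_atTop 2] with y hy
  have hy₀ : 0 < y := by linarith
  have hyβ : 0 < y + β := by positivity
  have hΓ := Real.Gamma_pos_of_pos hy₀
  have hGautschi := Real.Gamma_add_one_le_Gamma_add_mul_rpow hβ.le hβ₁ hyβ
  rw [Real.Gamma_add_one hy₀.ne'] at hGautschi
  calc 2 ^ (β - 1) * y ^ β = y * (2 * y) ^ (β - 1) := by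
        rw [Real.mul_rpow zero_le_two hy₀.le, Real.rpow_sub_one hy₀.ne']
        field_simp
    _ ≤ y * (y + β) ^ (β - 1) := mul_le_mul_of_nonneg_left
          (Real.rpow_le_rpow_of_nonpos hyβ (by linarith) (by linarith)) hy₀.le
    _ ≤ Real.Gamma (y + β) / Real.Gamma y := by
        have hcancel : (y + β) ^ (1 - β) * (y + β) ^ (β - 1) = 1 := by
          rw [← Real.rpow_add hyβ, sub_add_sub_cancel', sub_self, Real.rpow_zero]
        rw [le_div_iff₀ hΓ]
        calc y * (y + β) ^ (β - 1) * Real.Gamma y = y * Real.Gamma y * (y + β) ^ (β - 1) := by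
              ring
          _ ≤ Real.Gamma (y + β) * (y + β) ^ (1 - β) * (y + β) ^ (β - 1) := by gcongr
          _ = Real.Gamma (y + β) := by rw [mul_assoc, hcancel, mul_one]
    _ ≤ Real.Gamma (y + α) / Real.Gamma y := by
        gcongr
        exact Real.Gamma_strictMonoOn_Ici.monotoneOn (mem_Ici.2 (by linarith))
          (mem_Ici.2 (by linarith)) (add_le_add_right (min_le_left α 1) y)

theorem summable_pow_div_Gamma_mul_add (x : ℝ) {β : ℝ} (hβ : 0 < β) (γ : ℝ) :
    Summable (fun n : ℕ => x ^ n / Real.Gamma (n * β + γ)) := by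
  have harg : Tendsto (fun n : ℕ => (n : ℝ) * β + γ) atTop atTop :=
    tendsto_atTop_add_const_right _ γ (tendsto_natCast_atTop_atTop.atTop_mul_const hβ)
  refine summable_of_ratio_norm_eventually_le (r := 1 / 2) (by norm_num) ?_
  filter_upwards [harg.eventually (eventually_gt_atTop 0), harg.eventually
    ((Real.tendsto_Gamma_add_div_Gamma_atTop hβ).eventually (eventually_ge_atTop (2 * |x|)))]
    with n hpos hratio
  have hΓ := Real.Gamma_pos_of_pos hpos
  have hΓ' := Real.Gamma_pos_of_pos (add_pos hpos hβ)
  rw [le_div_iff₀ hΓ] at hratio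
  rw [Nat.cast_succ, add_one_mul, add_right_comm]
  simp only [norm_div, norm_pow, Real.norm_eq_abs, abs_of_pos hΓ, abs_of_pos hΓ']
  rw [div_le_iff₀ hΓ']
  calc |x| ^ (n + 1)
        = 1 / 2 * (|x| ^ n / Real.Gamma (n * β + γ)) * (2 * |x| * Real.Gamma (n * β + γ)) := by
          field_simp
          ring
    _ ≤ _ := by gcongr

lemma ofReal_rpow_mul_one_sub_rpow {a b x : ℝ} (hx : x ∈ Icc (0 : ℝ) 1) :
    ((x ^ (a - 1) * (1 - x) ^ (b - 1) : ℝ) : ℂ)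
      = (x : ℂ) ^ ((a : ℂ) - 1) * (1 - (x : ℂ)) ^ ((b : ℂ) - 1) := by
  rw [Complex.ofReal_mul, Complex.ofReal_cpow hx.1, Complex.ofReal_cpow (sub_nonneg.2 hx.2)]
  push_cast
  rfl

lemma intervalIntegrable_rpow_mul_one_sub_rpow {a b : ℝ} (ha : 0 < a) (hb : 0 < b) :
    IntervalIntegrable (fun x : ℝ => x ^ (a - 1) * (1 - x) ^ (b - 1)) volume 0 1 := by
  have h := Complex.betaIntegral_convergent (u := a) (v := b) (by simpa) (by simpa)
  rw [intervalIntegrable_iff_integrableOn_Ioc_of_le zero_le_one] at h ⊢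
  refine IntegrableOn.congr_fun h.re (fun x hx => ?_) measurableSet_Ioc
  simp [← ofReal_rpow_mul_one_sub_rpow (Ioc_subset_Icc_self hx)]

lemma integral_rpow_mul_one_sub_rpow {a b : ℝ} (ha : 0 < a) (hb : 0 < b) :
    ∫ x in (0 : ℝ)..1, x ^ (a - 1) * (1 - x) ^ (b - 1)
      = Real.Gamma a * Real.Gamma b / Real.Gamma (a + b) := by
  have h := Complex.betaIntegral_eq_Gamma_mul_div a b (by simpa) (by simpa)
  have hcongr : EqOn (fun x : ℝ => ((x ^ (a - 1) * (1 - x) ^ (b - 1) : ℝ) : ℂ))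
      (fun x : ℝ => (x : ℂ) ^ ((a : ℂ) - 1) * (1 - (x : ℂ)) ^ ((b : ℂ) - 1)) (uIcc 0 1) :=
    fun x hx => ofReal_rpow_mul_one_sub_rpow (uIcc_of_le (zero_le_one' ℝ) ▸ hx)
  rw [Complex.betaIntegral, ← intervalIntegral.integral_congr hcongr,
    intervalIntegral.integral_ofReal,
    ← Complex.ofReal_add, Complex.Gamma_ofReal, Complex.Gamma_ofReal, Complex.Gamma_ofReal] at h
  exact_mod_cast h

private lemma sub_rpow_mul_sub_rpow_comp_affine {a b s t x : ℝ} (hst : s ≤ t)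
    (hx : x ∈ Icc (0 : ℝ) 1) :
    (t - ((t - s) * x + s)) ^ (a - 1) * ((t - s) * x + s - s) ^ (b - 1)
      = (t - s) ^ (a - 1) * (t - s) ^ (b - 1) * (x ^ (b - 1) * (1 - x) ^ (a - 1)) := by
  rw [show t - ((t - s) * x + s) = (t - s) * (1 - x) by ring, add_sub_cancel_right,
    Real.mul_rpow (sub_nonneg.2 hst) (sub_nonneg.2 hx.2), Real.mul_rpow (sub_nonneg.2 hst) hx.1]
  ring

lemma intervalIntegrable_sub_rpow_mul_sub_rpow {a b s t : ℝ} (ha : 0 < a) (hb : 0 < b)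
    (hst : s < t) :
    IntervalIntegrable (fun z => (t - z) ^ (a - 1) * (z - s) ^ (b - 1)) volume s t := by
  set f := fun z => (t - z) ^ (a - 1) * (z - s) ^ (b - 1)
  have hu : t - s ≠ 0 := (sub_pos.2 hst).ne'
  have h01 : IntervalIntegrable (fun x => f ((t - s) * x + s)) volume 0 1 :=
    ((intervalIntegrable_rpow_mul_one_sub_rpow hb ha).const_mul
      ((t - s) ^ (a - 1) * (t - s) ^ (b - 1))).congr fun x hx =>
        (sub_rpow_mul_sub_rpow_comp_affine hst.le (Ioc_subset_Icc_self
          (uIoc_of_le (zero_le_one' ℝ) ▸ hx))).symm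
  have h0 : IntervalIntegrable (fun y => f (y + s)) volume 0 (t - s) := by
    rw [← IntervalIntegrable.comp_mul_left_iff hu, zero_div, div_self hu]
    exact h01
  simpa using (IntervalIntegrable.comp_add_right_iff (f := f)).1 h0

lemma integral_sub_rpow_mul_sub_rpow {a b s t : ℝ} (ha : 0 < a) (hb : 0 < b) (hst : s < t) :
    ∫ z in s..t, (t - z) ^ (a - 1) * (z - s) ^ (b - 1)
      = (t - s) ^ (a + b - 1) * (Real.Gamma a * Real.Gamma b / Real.Gamma (a + b)) := by
  have hu : 0 < t - s := sub_pos.2 hst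
  have hsub := intervalIntegral.smul_integral_comp_mul_add (a := 0) (b := 1)
    (fun z => (t - z) ^ (a - 1) * (z - s) ^ (b - 1)) (t - s) s
  rw [mul_zero, zero_add, mul_one, sub_add_cancel] at hsub
  rw [← hsub, intervalIntegral.integral_congr fun x hx =>
      sub_rpow_mul_sub_rpow_comp_affine hst.le (uIcc_of_le (zero_le_one' ℝ) ▸ hx),
    intervalIntegral.integral_const_mul, integral_rpow_mul_one_sub_rpow hb ha, add_comm b,
    mul_comm (Real.Gamma b), smul_eq_mul, show a + b - 1 = 1 + (a - 1) + (b - 1) by ring,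
    Real.rpow_add hu, Real.rpow_add hu, Real.rpow_one]
  ring

noncomputable def riemannLiouvilleKernel (a u : ℝ) : ℝ :=
  u ^ (a - 1) / Real.Gamma a

lemma riemannLiouvilleKernel_nonneg {a u : ℝ} (ha : 0 < a) (hu : 0 ≤ u) :
    0 ≤ riemannLiouvilleKernel a u :=
  div_nonneg (Real.rpow_nonneg hu _) (Real.Gamma_pos_of_pos ha).le

lemma intervalIntegrable_riemannLiouvilleKernel_mul {a b s t : ℝ} (ha : 0 < a) (hb : 0 < b)
    (hst : s < t) :
    IntervalIntegrable (fun z => riemannLiouvilleKernel a (t - z) * riemannLiouvilleKernel b (z - s))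
      volume s t := by
  simp only [riemannLiouvilleKernel, div_mul_div_comm]
  exact (intervalIntegrable_sub_rpow_mul_sub_rpow ha hb hst).div_const _

lemma integral_riemannLiouvilleKernel_mul {a b s t : ℝ} (ha : 0 < a) (hb : 0 < b)
    (hst : s < t) :
    ∫ z in s..t, riemannLiouvilleKernel a (t - z) * riemannLiouvilleKernel b (z - s)
      = riemannLiouvilleKernel (a + b) (t - s) := by
  have hΓa := (Real.Gamma_pos_of_pos ha).ne'
  have hΓb := (Real.Gamma_pos_of_pos hb).ne'
  simp only [riemannLiouvilleKernel, div_mul_div_comm]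
  rw [intervalIntegral.integral_div, integral_sub_rpow_mul_sub_rpow ha hb hst]
  field_simp

section Resolvent

variable {c α : ℝ}

lemma pow_succ_mul_riemannLiouvilleKernel {u : ℝ} (hu : 0 < u) (n : ℕ) :
    c ^ (n + 1) * riemannLiouvilleKernel ((n + 1) * α) u
      = c * u ^ (α - 1) * ((c * u ^ α) ^ n / Real.Gamma (n * α + α)) := by
  rw [riemannLiouvilleKernel, mul_pow, ← Real.rpow_natCast (u ^ α), ← Real.rpow_mul hu.le,
    show ((n : ℝ) + 1) * α - 1 = (α - 1) + α * n by ring, Real.rpow_add hu, add_one_mul, pow_succ]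
  ring

lemma summable_pow_succ_mul_riemannLiouvilleKernel (c : ℝ) (hα : 0 < α) {u : ℝ} (hu : 0 < u) :
    Summable (fun n : ℕ => c ^ (n + 1) * riemannLiouvilleKernel ((n + 1) * α) u) := by
  simpa only [pow_succ_mul_riemannLiouvilleKernel hu] using
    (summable_pow_div_Gamma_mul_add (c * u ^ α) hα α).mul_left (c * u ^ (α - 1))

lemma mul_rpow_mul_mittagLeffler_eq_tsum (c α : ℝ) {u : ℝ} (hu : 0 < u) :
    c * u ^ (α - 1) * mittagLeffler α α (c * u ^ α)
      = ∑' n : ℕ, c ^ (n + 1) * riemannLiouvilleKernel ((n + 1) * α) u := by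
  simp only [pow_succ_mul_riemannLiouvilleKernel hu, mittagLeffler, tsum_mul_left]

variable {s t : ℝ}

lemma integral_riemannLiouvilleKernel_mul_succ (hα : 0 < α) (hst : s < t) (n : ℕ) :
    ∫ z in s..t, riemannLiouvilleKernel α (t - z) * riemannLiouvilleKernel ((n + 1) * α) (z - s)
      = riemannLiouvilleKernel ((n + 2) * α) (t - s) := by
  rw [integral_riemannLiouvilleKernel_mul hα (by positivity) hst]
  congr 1
  ring

lemma integral_tsum_pow_mul_riemannLiouvilleKernel_mul (c : ℝ) (hα : 0 < α) (hst : s < t) :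
    ∫ z in s..t, ∑' n : ℕ, c ^ (n + 2) *
        (riemannLiouvilleKernel α (t - z) * riemannLiouvilleKernel ((n + 1) * α) (z - s))
      = ∑' n : ℕ, c ^ (n + 2) * riemannLiouvilleKernel ((n + 2) * α) (t - s) := by
  have hint (n : ℕ) := ((intervalIntegrable_riemannLiouvilleKernel_mul hα
    (by positivity : 0 < ((n : ℝ) + 1) * α) hst).const_mul (c ^ (n + 2))).1
  have hnorm (n : ℕ) : ∫ z in Ioc s t, ‖c ^ (n + 2) *
        (riemannLiouvilleKernel α (t - z) * riemannLiouvilleKernel ((n + 1) * α) (z - s))‖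
      = |c| ^ (n + 2) * riemannLiouvilleKernel ((n + 2) * α) (t - s) := by
    rw [← integral_riemannLiouvilleKernel_mul_succ hα hst, ← intervalIntegral.integral_const_mul,
      intervalIntegral.integral_of_le hst.le]
    refine setIntegral_congr_fun measurableSet_Ioc fun z hz => ?_
    rw [norm_mul, norm_pow, Real.norm_eq_abs, Real.norm_of_nonneg (mul_nonneg
      (riemannLiouvilleKernel_nonneg hα (sub_nonneg.2 hz.2))
      (riemannLiouvilleKernel_nonneg (by positivity) (sub_nonneg.2 hz.1.le)))]
  have hsum : Summable fun n : ℕ => ∫ z in Ioc s t, ‖c ^ (n + 2) *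
      (riemannLiouvilleKernel α (t - z) * riemannLiouvilleKernel ((n + 1) * α) (z - s))‖ := by
    simpa only [hnorm, Nat.cast_add_one, add_assoc, one_add_one_eq_two] using
      (summable_nat_add_iff 1).2
        (summable_pow_succ_mul_riemannLiouvilleKernel |c| hα (sub_pos.2 hst))
  rw [intervalIntegral.integral_of_le hst.le, ← integral_tsum_of_summable_integral_norm hint hsum]
  refine tsum_congr fun n => ?_
  rw [integral_const_mul, ← intervalIntegral.integral_of_le hst.le,
    integral_riemannLiouvilleKernel_mul_succ hα hst]

end Resolvent

theorem fractionalKernel_resolvent_eq_general (c α s t : ℝ) (hα : 0 < α)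
    (hst : s < t) :
    c * (t - s) ^ (α - 1) * mittagLeffler α α (c * (t - s) ^ α)
      = c * (t - s) ^ (α - 1) / Real.Gamma α
        + ∫ z in s..t, (c * (t - z) ^ (α - 1) / Real.Gamma α)
            * (c * (z - s) ^ (α - 1) * mittagLeffler α α (c * (z - s) ^ α)) := by
  have hintegrand : ∀ z ∈ Ioc s t,
      (c * (t - z) ^ (α - 1) / Real.Gamma α)
          * (c * (z - s) ^ (α - 1) * mittagLeffler α α (c * (z - s) ^ α))
        = ∑' n : ℕ, c ^ (n + 2) *
          (riemannLiouvilleKernel α (t - z) * riemannLiouvilleKernel ((n + 1) * α) (z - s)) := by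
    intro z hz
    rw [mul_rpow_mul_mittagLeffler_eq_tsum c α (sub_pos.2 hz.1), ← tsum_mul_left]
    refine tsum_congr fun n => ?_
    simp only [riemannLiouvilleKernel]
    ring
  rw [intervalIntegral.integral_congr_ae
      (ae_of_all _ fun z hz => hintegrand z (uIoc_of_le hst.le ▸ hz)),
    integral_tsum_pow_mul_riemannLiouvilleKernel_mul c hα hst,
    mul_rpow_mul_mittagLeffler_eq_tsum c α (sub_pos.2 hst),
    (summable_pow_succ_mul_riemannLiouvilleKernel c hα (sub_pos.2 hst)).tsum_eq_zero_add]
  congr 1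
  · simp [riemannLiouvilleKernel, mul_div_assoc]
  · simp only [Nat.cast_add_one, add_assoc, one_add_one_eq_two]

/-- The function `R(t,s) = c (t−s)^{α−1} E_{α,α}(c (t−s)^α)` satisfies the resolvent
equation for the fractional kernel `G(t,s) = c (t−s)^{α−1} / Γ(α)`:
`R = G + G ⋆ R` (the ⋆-product reducing to an integral over `[s,t]`). -/
theorem fractionalKernel_resolvent_eq (c α s t : ℝ) (hα : 0 < α)
    (hs : 0 ≤ s) (hst : s < t) :
    c * (t - s) ^ (α - 1) * mittagLeffler α α (c * (t - s) ^ α)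
      = c * (t - s) ^ (α - 1) / Real.Gamma α
        + ∫ z in s..t, (c * (t - z) ^ (α - 1) / Real.Gamma α)
            * (c * (z - s) ^ (α - 1) * mittagLeffler α α (c * (z - s) ^ α)) :=
  fractionalKernel_resolvent_eq_general c α s t hα hst
end

section
/- Fix T > 0 and H ∈ (0,1), and define the fractional kernel G(t,s) = 1_{s<t} (t−s)^{H−1/2} for real t, s. Then G is a Volterra kernel of continuous and bounded type in L² on [0,T]: (i) G(t,s) = 0 for s ≥ t; (ii) sup_{t ∈ [0,T]} ∫_0^T (|G(t,s)|² + |G(s,t)|²) ds < ∞ (indeed this supremum is at most T^{2H}/H); and (iii) for every u ∈ [0,T], ∫_0^T |G(u+h,s) − G(u,s)|² ds → 0 as h → 0. -/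
/-!
Squaring `G(t, ·)` gives a translate of `x ↦ 1_{x>0} x^{2H-1}`, which is locally integrable for
`H > 0` with explicit primitives; this gives (ii). For (iii), when `s ∈ [0,T]` and `|h| < 1` both
`G(u+h, s)` and `G(u, s)` are values at `u - s + h` and `u - s` of one fixed function of `L²(ℝ)`,
namely `G(·, 0)` cut off far to the right, so (iii) is continuity of translation in `L²`.
-/

open MeasureTheory Filter

/-- The fractional kernel `G(t,s) = 1_{s<t} (t−s)^{H−1/2}`, defined for all real arguments. -/
noncomputable def fracKernel (H t s : ℝ) : ℝ :=
  if s < t then (t - s) ^ (H - 1/2) else 0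

open Set Topology intervalIntegral
open scoped ENNReal Interval

theorem tendsto_integral_norm_comp_add_sub_rpow {G E : Type*} [AddCommGroup G]
    [TopologicalSpace G] [IsTopologicalAddGroup G] [MeasurableSpace G] [BorelSpace G]
    {μ : Measure G} [μ.IsAddLeftInvariant] [IsLocallyFiniteMeasure μ] [μ.InnerRegularCompactLTTop]
    [NormedAddCommGroup E] {p : ℝ≥0∞} [Fact (1 ≤ p)] (hp : p ≠ ∞) {f : G → E} (hf : MemLp f p μ) :
    Tendsto (fun h : G => ∫ x, ‖f (x + h) - f x‖ ^ p.toReal ∂μ) (𝓝 0) (𝓝 0) := by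
  have : Fact (p ≠ ∞) := ⟨hp⟩
  have hp₀ : p ≠ 0 := (zero_lt_one.trans_le Fact.out).ne'
  have hp_pos : 0 < p.toReal := ENNReal.toReal_pos hp₀ hp
  have hcont : Continuous (fun h : G => DomAddAct.mk h +ᵥ hf.toLp f) :=
    DomAddAct.continuous_mk.vadd continuous_const
  have hlim := (tendsto_iff_norm_sub_tendsto_zero.1 (by simpa using hcont.tendsto 0)).rpow_const
    (p := p.toReal) (Or.inr hp_pos.le)
  rw [Real.zero_rpow hp_pos.ne'] at hlim
  refine hlim.congr fun h => ?_
  have hae : ((DomAddAct.mk h +ᵥ hf.toLp f) - hf.toLp f : Lp E p μ)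
      =ᵐ[μ] fun x => f (x + h) - f x := by
    filter_upwards [Lp.coeFn_sub (DomAddAct.mk h +ᵥ hf.toLp f) (hf.toLp f),
      DomAddAct.vadd_Lp_ae_eq (DomAddAct.mk h) (hf.toLp f), hf.coeFn_toLp,
      (measurePreserving_add_left μ h).quasiMeasurePreserving.ae_eq_comp hf.coeFn_toLp]
      with x hsub hvadd hx hhx
    rw [hsub, Pi.sub_apply, hvadd, Equiv.symm_apply_apply, vadd_eq_add, add_comm x]
    exact congrArg₂ _ hhx hx
  have hmeas : AEStronglyMeasurable (fun x => f (x + h) - f x) μ :=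
    (hf.1.comp_measurePreserving (measurePreserving_add_right μ h)).sub hf.1
  rw [Lp.norm_def, eLpNorm_congr_ae hae, toReal_eLpNorm hmeas,
    lpNorm_eq_integral_norm_rpow_toReal hp₀ hp hmeas,
    Real.rpow_inv_rpow (integral_nonneg fun _ => by positivity) hp_pos.ne']

theorem tendsto_intervalIntegral_sq_comp_add_sub {f : ℝ → ℝ} (hf : MemLp f 2) (a b : ℝ) :
    Tendsto (fun h => ∫ x in a..b, (f (x + h) - f x) ^ 2) (𝓝 0) (𝓝 0) := by
  have hlim := tendsto_integral_norm_comp_add_sub_rpow ENNReal.ofNat_ne_top hf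
  simp only [ENNReal.toReal_ofNat, Real.rpow_ofNat, Real.norm_eq_abs, sq_abs] at hlim
  refine squeeze_zero_norm (fun h => ?_) hlim
  have hint : Integrable (fun x => (f (x + h) - f x) ^ 2) :=
    ((hf.comp_measurePreserving (measurePreserving_add_right volume h)).sub hf).integrable_sq
  calc ‖∫ x in a..b, (f (x + h) - f x) ^ 2‖
      ≤ ∫ x in Ι a b, ‖(f (x + h) - f x) ^ 2‖ := norm_integral_le_integral_norm_uIoc
    _ ≤ ∫ x, (f (x + h) - f x) ^ 2 := by
      simp only [Real.norm_eq_abs, abs_sq]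
      exact setIntegral_le_integral hint (.of_forall fun _ => sq_nonneg _)

section

variable {H : ℝ}

theorem fracKernel_of_le {t s : ℝ} (h : t ≤ s) : fracKernel H t s = 0 :=
  if_neg h.not_gt

theorem fracKernel_eq_sub (t s : ℝ) : fracKernel H t s = fracKernel H (t - s) 0 := by
  simp only [fracKernel, sub_pos, sub_zero]

theorem measurable_fracKernel_left : Measurable fun x => fracKernel H x 0 :=
  Measurable.ite measurableSet_Ioi (by fun_prop) measurable_const

theorem fracKernel_sq (x : ℝ) :
    fracKernel H x 0 ^ 2 = (Ioi 0).indicator (fun x => x ^ (2 * H - 1)) x := by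
  unfold fracKernel
  split_ifs with hx
  · rw [indicator_of_mem (mem_Ioi.2 hx), sub_zero, ← Real.rpow_natCast, ← Real.rpow_mul hx.le]
    ring_nf
  · rw [indicator_of_notMem (notMem_Ioi.2 (not_lt.1 hx))]
    ring

theorem intervalIntegrable_fracKernel_sq (hH : 0 < H) (a b : ℝ) :
    IntervalIntegrable (fun x => fracKernel H x 0 ^ 2) volume a b := by
  simp_rw [fracKernel_sq, intervalIntegrable_iff]
  exact (intervalIntegrable_iff.1 (intervalIntegrable_rpow' (by linarith))).indicator
    measurableSet_Ioi

theorem integral_fracKernel_sq (hH : 0 < H) {a b : ℝ} (ha : a ≤ 0) (hb : 0 ≤ b) :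
    ∫ x in a..b, fracKernel H x 0 ^ 2 = b ^ (2 * H) / (2 * H) := by
  calc ∫ x in a..b, fracKernel H x 0 ^ 2
      = ∫ x in Ioc a b, (Ioi 0).indicator (fun x => x ^ (2 * H - 1)) x := by
        simp_rw [integral_of_le (ha.trans hb), fracKernel_sq]
    _ = ∫ x in 0..b, x ^ (2 * H - 1) := by
        rw [setIntegral_indicator measurableSet_Ioi, Ioc_inter_Ioi, max_eq_right ha,
          integral_of_le hb]
    _ = b ^ (2 * H) / (2 * H) := by
        rw [integral_rpow (.inl (by linarith)), sub_add_cancel,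
          Real.zero_rpow (by positivity), sub_zero]

theorem intervalIntegrable_fracKernel_sq_left (hH : 0 < H) (t a b : ℝ) :
    IntervalIntegrable (fun s => fracKernel H t s ^ 2) volume a b := by
  simpa [← fracKernel_eq_sub] using
    (intervalIntegrable_fracKernel_sq hH (t - a) (t - b)).comp_sub_left t

theorem intervalIntegrable_fracKernel_sq_right (hH : 0 < H) (t a b : ℝ) :
    IntervalIntegrable (fun s => fracKernel H s t ^ 2) volume a b := by
  simpa [← fracKernel_eq_sub] using
    (intervalIntegrable_fracKernel_sq hH (a - t) (b - t)).comp_sub_right t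

theorem integral_fracKernel_sq_left (hH : 0 < H) {t a b : ℝ} (hat : a ≤ t) (htb : t ≤ b) :
    ∫ s in a..b, fracKernel H t s ^ 2 = (t - a) ^ (2 * H) / (2 * H) := by
  simp only [fracKernel_eq_sub t]
  rw [integral_comp_sub_left (fun x => fracKernel H x 0 ^ 2) t]
  exact integral_fracKernel_sq hH (by linarith) (by linarith)

theorem integral_fracKernel_sq_right (hH : 0 < H) {t a b : ℝ} (hat : a ≤ t) (htb : t ≤ b) :
    ∫ s in a..b, fracKernel H s t ^ 2 = (b - t) ^ (2 * H) / (2 * H) := by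
  simp only [fracKernel_eq_sub _ t]
  rw [integral_comp_sub_right (fun x => fracKernel H x 0 ^ 2) t]
  exact integral_fracKernel_sq hH (by linarith) (by linarith)

theorem integral_sq_fracKernel_add_le (hH : 0 < H) {t T : ℝ} (ht : 0 ≤ t) (htT : t ≤ T) :
    ∫ s in 0..T, (|fracKernel H t s| ^ 2 + |fracKernel H s t| ^ 2) ≤ T ^ (2 * H) / H := by
  simp only [sq_abs]
  rw [integral_add (intervalIntegrable_fracKernel_sq_left hH t 0 T)
    (intervalIntegrable_fracKernel_sq_right hH t 0 T), integral_fracKernel_sq_left hH ht htT,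
    integral_fracKernel_sq_right hH ht htT, sub_zero]
  have h₁ : t ^ (2 * H) ≤ T ^ (2 * H) := Real.rpow_le_rpow ht htT (by positivity)
  have h₂ : (T - t) ^ (2 * H) ≤ T ^ (2 * H) :=
    Real.rpow_le_rpow (by linarith) (by linarith) (by positivity)
  calc t ^ (2 * H) / (2 * H) + (T - t) ^ (2 * H) / (2 * H)
      ≤ T ^ (2 * H) / (2 * H) + T ^ (2 * H) / (2 * H) := by gcongr
    _ = T ^ (2 * H) / H := by field_simp; ring

theorem memLp_indicator_fracKernel (hH : 0 < H) (R : ℝ) :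
    MemLp ((Iio R).indicator fun x => fracKernel H x 0) 2 := by
  refine (memLp_two_iff_integrable_sq
    (measurable_fracKernel_left.indicator measurableSet_Iio).aestronglyMeasurable).2 ?_
  have hsq : (fun x => (Iio R).indicator (fun x => fracKernel H x 0) x ^ 2)
      = (Ioo 0 R).indicator fun x => x ^ (2 * H - 1) := by
    ext x
    by_cases hxR : x < R <;> simp [fracKernel_sq, indicator, hxR]
  rw [hsq, integrable_indicator_iff measurableSet_Ioo]
  exact (intervalIntegrable_rpow' (by linarith) (a := 0) (b := R)).1.mono_set Ioo_subset_Ioc_self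

theorem tendsto_integral_sq_fracKernel_sub (hH : 0 < H) (u T : ℝ) :
    Tendsto (fun h => ∫ s in 0..T, |fracKernel H (u + h) s - fracKernel H u s| ^ 2)
      (𝓝 0) (𝓝 0) := by
  set φ := (Iio (u + |T| + 1)).indicator fun x => fracKernel H x 0
  have hφ : MemLp φ 2 := memLp_indicator_fracKernel hH _
  refine (tendsto_intervalIntegral_sq_comp_add_sub hφ (u - T) u).congr' ?_
  filter_upwards [Ioo_mem_nhds neg_one_lt_zero one_pos] with h hh_mem
  have hsub := integral_comp_sub_left (fun x => (φ (x + h) - φ x) ^ 2) (a := 0) (b := T) u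
  rw [sub_zero] at hsub
  rw [← hsub]
  refine integral_congr fun s hs => ?_
  have hs_lower : -|T| ≤ s := le_trans (by simp [neg_abs_le]) hs.1
  simp only [φ, sq_abs, fracKernel_eq_sub (u + h) s, fracKernel_eq_sub u s]
  rw [indicator_of_mem, indicator_of_mem, add_sub_right_comm]
  · simp only [mem_Iio]; linarith
  · simp only [mem_Iio]; linarith [hh_mem.2]

end

theorem fracKernel_volterra_L2_general (T H : ℝ) (hH : H ∈ Set.Ioo (0 : ℝ) 1) :
    (∀ t s : ℝ, t ≤ s → fracKernel H t s = 0) ∧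
    (∀ t ∈ Set.Icc (0 : ℝ) T,
      (∫ s in (0:ℝ)..T, (|fracKernel H t s| ^ 2 + |fracKernel H s t| ^ 2))
        ≤ T ^ (2 * H) / H) ∧
    (∀ u ∈ Set.Icc (0 : ℝ) T,
      Tendsto (fun h : ℝ => ∫ s in (0:ℝ)..T, |fracKernel H (u + h) s - fracKernel H u s| ^ 2)
        (nhds 0) (nhds 0)) :=
  ⟨fun _ _ => fracKernel_of_le, fun _ ht => integral_sq_fracKernel_add_le hH.1 ht.1 ht.2,
    fun u _ => tendsto_integral_sq_fracKernel_sub hH.1 u T⟩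

/-- For `T > 0` and `H ∈ (0,1)`, the fractional kernel `G(t,s) = 1_{s<t}(t−s)^{H−1/2}` is a
Volterra kernel of continuous and bounded type in `L²` on `[0,T]`:
(i) it vanishes for `s ≥ t`;
(ii) `sup_{t ∈ [0,T]} ∫_0^T (|G(t,s)|² + |G(s,t)|²) ds ≤ T^{2H}/H < ∞`;
(iii) for every `u ∈ [0,T]`, `∫_0^T |G(u+h,s) − G(u,s)|² ds → 0` as `h → 0`. -/
theorem fracKernel_volterra_L2 (T H : ℝ) (hT : 0 < T) (hH : H ∈ Set.Ioo (0 : ℝ) 1) :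
    (∀ t s : ℝ, t ≤ s → fracKernel H t s = 0) ∧
    (∀ t ∈ Set.Icc (0 : ℝ) T,
      (∫ s in (0:ℝ)..T, (|fracKernel H t s| ^ 2 + |fracKernel H s t| ^ 2))
        ≤ T ^ (2 * H) / H) ∧
    (∀ u ∈ Set.Icc (0 : ℝ) T,
      Tendsto (fun h : ℝ => ∫ s in (0:ℝ)..T, |fracKernel H (u + h) s - fracKernel H u s| ^ 2)
        (nhds 0) (nhds 0)) :=
  fracKernel_volterra_L2_general T H hH
end

section
/- Let α > 0, ε > 0, and 0 < t ≤ u be real numbers. Then ∫_0^t (t − s + ε)^{α−1} (u − s + ε)^{α−1} ds = t (t+ε)^{α−1} (u+ε)^{α−1} · F₁(1, 1−α, 1−α, 2; t/(u+ε), t/(t+ε)), where the double series defining F₁ converges absolutely since both arguments t/(u+ε) and t/(t+ε) lie in [0,1). In particular, the discretized covariance matrix entries Σ_0^{i,j;N} = η_ν² ∫_0^T G_ν(t_{i−1},s) G_ν(t_{j−1},s) ds of the shifted fractional kernel G_ν(t,s) = 1_{s<t}(t−s+ε)^{α−1}/Γ(α) admit, for 1 ≤ i ≤ j, the closed form (η_ν²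 t_{i−1} (t_{i−1}+ε)^{α−1} (t_{j−1}+ε)^{α−1} / Γ(α)²) · F₁(1, 1−α, 1−α, 2; t_{i−1}/(t_{j−1}+ε), t_{i−1}/(t_{i−1}+ε)). -/
open MeasureTheory

/-- The general term of the double series defining the Appell hypergeometric function
`F₁(a,b,b',c;x,y)`: `((a)_{m+n} (b)_m (b')_n) / ((c)_{m+n} m! n!) x^m y^n`, where
`(q)_k` is the rising Pochhammer symbol. -/
noncomputable def appellF1Term (a b b' c x y : ℝ) (p : ℕ × ℕ) : ℝ :=
  ((ascPochhammer ℝ (p.1 + p.2)).eval a * (ascPochhammer ℝ p.1).eval b *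
      (ascPochhammer ℝ p.2).eval b') /
    ((ascPochhammer ℝ (p.1 + p.2)).eval c * (p.1.factorial : ℝ) * (p.2.factorial : ℝ)) *
    x ^ p.1 * y ^ p.2

/-- The Appell hypergeometric function of the first kind,
`F₁(a,b,b',c;x,y) = ∑_{m,n≥0} ((a)_{m+n} (b)_m (b')_n)/((c)_{m+n} m! n!) x^m y^n`. -/
noncomputable def appellF1 (a b b' c x y : ℝ) : ℝ :=
  ∑' p : ℕ × ℕ, appellF1Term a b b' c x y p

/-!
Both factors of the integrand are binomial series on `[0, t]`:
`(A - s)^(-b) = A^(-b) ∑ₘ (b)ₘ/m! (s/A)^m`, convergent since `0 ≤ s/A < 1`.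
Multiplying the two series and integrating termwise (dominated convergence, with the constant
majorant given by the absolutely convergent series at `s = t`) produces
`∫₀ᵗ s^(m+n) ds = t^(m+n+1)/(m+n+1)`, and `1/(m+n+1) = (1)_{m+n}/(2)_{m+n}` turns the resulting
double series into `t A^(-b) B^(-b') F₁(1, b, b', 2; t/A, t/B)`.
-/

open Nat in
theorem ascPochhammer_eval_div_factorial {K : Type*} [Field K] [CharZero K] (a : K) (n : ℕ) :
    (ascPochhammer K n).eval a / n ! = Ring.choose (a + n - 1) n := by
  rw [← Ring.multichoose_eq, ← Polynomial.ascPochhammer_smeval_eq_eval,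
    ← Ring.factorial_nsmul_multichoose_eq_ascPochhammer, nsmul_eq_mul]
  field_simp [Nat.factorial_ne_zero]

theorem appellF1Term_one_two (b b' x y : ℝ) (p : ℕ × ℕ) :
    appellF1Term 1 b b' 2 x y p =
      Ring.choose (b + p.1 - 1) p.1 * x ^ p.1 * (Ring.choose (b' + p.2 - 1) p.2 * y ^ p.2) /
        (p.1 + p.2 + 1) := by
  obtain ⟨m, n⟩ := p
  have h2 := factorial_mul_ascPochhammer ℝ 1 (m + n)
  simp only [Nat.factorial_one, Nat.cast_one, one_mul, one_add_one_eq_two] at h2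
  simp only [appellF1Term, ascPochhammer_eval_one, h2, ← ascPochhammer_eval_div_factorial]
  rw [add_comm 1, Nat.factorial_succ]
  push_cast
  field_simp

theorem Real.hasSum_choose_mul_pow (a : ℝ) {z : ℝ} (hz : |z| < 1) :
    HasSum (fun n : ℕ => Ring.choose (a + n - 1) n * z ^ n) ((1 - z) ^ (-a)) := by
  have h := (Real.one_div_one_sub_rpow_hasFPowerSeriesOnBall_zero a).hasSum
    (y := z) (by simpa [enorm_eq_nnnorm, ← NNReal.coe_lt_one] using hz)
  have h1z : 0 ≤ 1 - z := by linarith [le_abs_self z]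
  simpa [FormalMultilinearSeries.ofScalars_apply_eq, Real.rpow_neg h1z, mul_comm] using h

theorem Real.summable_norm_choose_mul_pow (a : ℝ) {z : ℝ} (hz : |z| < 1) :
    Summable (fun n : ℕ => ‖Ring.choose (a + n - 1) n * z ^ n‖) := by
  have hp := Real.one_div_one_sub_rpow_hasFPowerSeriesOnBall_zero a
  have hzr : z ∈ Metric.eball 0 1 := by simpa [enorm_eq_nnnorm, ← NNReal.coe_lt_one] using hz
  have h := FormalMultilinearSeries.summable_norm_apply _ (Metric.eball_subset_eball hp.r_le hzr)
  simpa [FormalMultilinearSeries.ofScalars_apply_eq, mul_comm] using h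

theorem Real.hasSum_sub_rpow_neg (a : ℝ) {A s : ℝ} (hA : 0 < A) (hs : |s| < A) :
    HasSum (fun n : ℕ => A ^ (-a) * Ring.choose (a + n - 1) n / A ^ n * s ^ n)
      ((A - s) ^ (-a)) := by
  have hz : |s / A| < 1 := by rwa [abs_div, abs_of_pos hA, div_lt_one hA]
  have hsA : A - s = A * (1 - s / A) := by field_simp
  rw [hsA, Real.mul_rpow hA.le (by linarith [le_abs_self (s / A)])]
  refine ((Real.hasSum_choose_mul_pow a hz).mul_left (A ^ (-a))).congr_fun fun n => ?_
  rw [div_pow]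
  ring

theorem hasSum_intervalIntegral_mul_of_hasSum_pow {a b : ℕ → ℝ} {f g : ℝ → ℝ} {t : ℝ}
    (ht : 0 ≤ t) (ha : Summable fun m => ‖a m * t ^ m‖) (hb : Summable fun n => ‖b n * t ^ n‖)
    (hf : ∀ s ∈ Set.Ioc 0 t, HasSum (fun m => a m * s ^ m) (f s))
    (hg : ∀ s ∈ Set.Ioc 0 t, HasSum (fun n => b n * s ^ n) (g s)) :
    HasSum (fun p : ℕ × ℕ => a p.1 * b p.2 * (t ^ (p.1 + p.2 + 1) / (p.1 + p.2 + 1)))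
      (∫ s in 0..t, f s * g s) := by
  have hmaj : ∀ s ∈ Set.Ioc 0 t, ∀ p : ℕ × ℕ,
      ‖a p.1 * s ^ p.1 * (b p.2 * s ^ p.2)‖ ≤ ‖a p.1 * t ^ p.1‖ * ‖b p.2 * t ^ p.2‖ := by
    intro s hs p
    simp only [norm_mul, norm_pow, Real.norm_eq_abs, abs_of_pos hs.1, abs_of_nonneg ht]
    have hs0 : 0 ≤ s := hs.1.le
    have hst : s ≤ t := hs.2
    gcongr
  have hprod : Summable fun p : ℕ × ℕ => ‖a p.1 * t ^ p.1‖ * ‖b p.2 * t ^ p.2‖ :=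
    ha.mul_of_nonneg hb (fun _ => norm_nonneg _) (fun _ => norm_nonneg _)
  have hpt : ∀ s ∈ Set.Ioc 0 t, HasSum (fun p : ℕ × ℕ => a p.1 * s ^ p.1 * (b p.2 * s ^ p.2))
      (f s * g s) := fun s hs =>
    (hf s hs).mul (hg s hs) (.of_norm_bounded hprod (hmaj s hs))
  have hlim := intervalIntegral.hasSum_integral_of_dominated_convergence
    (μ := volume) (a := 0) (b := t)
    (F := fun (p : ℕ × ℕ) s => a p.1 * s ^ p.1 * (b p.2 * s ^ p.2))
    (fun p _ => ‖a p.1 * t ^ p.1‖ * ‖b p.2 * t ^ p.2‖)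
    (fun p => (by fun_prop : Continuous _).aestronglyMeasurable)
    (fun p => .of_forall fun s hs => hmaj s (Set.uIoc_of_le ht ▸ hs) p)
    (.of_forall fun _ _ => hprod) intervalIntegrable_const
    (.of_forall fun s hs => hpt s (Set.uIoc_of_le ht ▸ hs))
  refine hlim.congr_fun fun p => ?_
  have hmon : (fun s : ℝ => a p.1 * s ^ p.1 * (b p.2 * s ^ p.2)) =
      fun s => a p.1 * b p.2 * s ^ (p.1 + p.2) := by
    ext s
    ring
  rw [hmon, intervalIntegral.integral_const_mul, integral_pow]
  simp

theorem hasSum_intervalIntegral_sub_rpow_mul_sub_rpow (b b' : ℝ) {A B t : ℝ} (ht : 0 ≤ t)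
    (htA : t < A) (htB : t < B) :
    HasSum (fun p => t * A ^ (-b) * B ^ (-b') * appellF1Term 1 b b' 2 (t / A) (t / B) p)
      (∫ s in 0..t, (A - s) ^ (-b) * (B - s) ^ (-b')) := by
  have hexp : ∀ (a : ℝ) {C : ℝ}, t < C → ∀ s ∈ Set.Ioc 0 t,
      HasSum (fun n : ℕ => C ^ (-a) * Ring.choose (a + n - 1) n / C ^ n * s ^ n)
        ((C - s) ^ (-a)) := fun a C htC s hs =>
    Real.hasSum_sub_rpow_neg a (hs.1.trans_le (hs.2.trans htC.le))
      (by rw [abs_of_pos hs.1]; exact hs.2.trans_lt htC)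
  have hnorm : ∀ (a : ℝ) {C : ℝ}, t < C →
      Summable fun n : ℕ => ‖C ^ (-a) * Ring.choose (a + n - 1) n / C ^ n * t ^ n‖ := by
    intro a C htC
    have hC : 0 < C := ht.trans_lt htC
    have htC' : |t / C| < 1 := by rwa [abs_div, abs_of_nonneg ht, abs_of_pos hC, div_lt_one hC]
    refine ((Real.summable_norm_choose_mul_pow a htC').mul_left ‖C ^ (-a)‖).congr fun n => ?_
    rw [← norm_mul, div_pow]
    ring_nf
  refine (hasSum_intervalIntegral_mul_of_hasSum_pow ht (hnorm b htA) (hnorm b' htB)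
    (hexp b htA) (hexp b' htB)).congr_fun fun p => ?_
  have hA : A ≠ 0 := (ht.trans_lt htA).ne'
  have hB : B ≠ 0 := (ht.trans_lt htB).ne'
  rw [appellF1Term_one_two, div_pow, div_pow, pow_succ, pow_add]
  field_simp

theorem shiftedFracKernel_covariance_integral_general (α ε t u : ℝ) (hε : 0 < ε)
    (ht : 0 < t) (htu : t ≤ u) :
    Summable (fun p : ℕ × ℕ =>
        appellF1Term 1 (1 - α) (1 - α) 2 (t / (u + ε)) (t / (t + ε)) p) ∧
    (∫ s in (0:ℝ)..t, (t - s + ε) ^ (α - 1) * (u - s + ε) ^ (α - 1))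
      = t * (t + ε) ^ (α - 1) * (u + ε) ^ (α - 1) *
          appellF1 1 (1 - α) (1 - α) 2 (t / (u + ε)) (t / (t + ε)) := by
  have h := hasSum_intervalIntegral_sub_rpow_mul_sub_rpow (1 - α) (1 - α) ht.le
    (by linarith : t < u + ε) (by linarith : t < t + ε)
  rw [neg_sub] at h
  have hK : t * (u + ε) ^ (α - 1) * (t + ε) ^ (α - 1) ≠ 0 := by
    have := Real.rpow_pos_of_pos (by linarith : 0 < u + ε) (α - 1)
    positivity
  refine ⟨(summable_mul_left_iff hK).1 h.summable, ?_⟩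
  calc (∫ s in (0:ℝ)..t, (t - s + ε) ^ (α - 1) * (u - s + ε) ^ (α - 1))
      = ∫ s in (0:ℝ)..t, (u + ε - s) ^ (α - 1) * (t + ε - s) ^ (α - 1) := by
        congr 1
        ext s
        rw [mul_comm]
        ring_nf
    _ = _ := h.tsum_eq.symm
    _ = _ := by
        rw [tsum_mul_left, appellF1]
        ring

/-- Closed form for the covariance-type integral of the shifted fractional kernel:
for `α > 0`, `ε > 0`, `0 < t ≤ u`,
`∫_0^t (t−s+ε)^{α−1} (u−s+ε)^{α−1} ds
  = t (t+ε)^{α−1} (u+ε)^{α−1} F₁(1, 1−α, 1−α, 2; t/(u+ε), t/(t+ε))`,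
the double series defining `F₁` being absolutely convergent since both arguments lie
in `[0,1)`. -/
theorem shiftedFracKernel_covariance_integral (α ε t u : ℝ) (hα : 0 < α) (hε : 0 < ε)
    (ht : 0 < t) (htu : t ≤ u) :
    Summable (fun p : ℕ × ℕ =>
        appellF1Term 1 (1 - α) (1 - α) 2 (t / (u + ε)) (t / (t + ε)) p) ∧
    (∫ s in (0:ℝ)..t, (t - s + ε) ^ (α - 1) * (u - s + ε) ^ (α - 1))
      = t * (t + ε) ^ (α - 1) * (u + ε) ^ (α - 1) *
          appellF1 1 (1 - α) (1 - α) 2 (t / (u + ε)) (t / (t + ε)) :=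
  shiftedFracKernel_covariance_integral_general α ε t u hε ht htu
end
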